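/- (Entropies of the collective phase flip channel output on Bell states.) Fix 0 ≤ p ≤ 1. Let |ψ₊⟩ = (|00⟩+|11⟩)/√2 and |ψ₋⟩ = (|00⟩−|11⟩)/√2 in ℂ² ⊗ ℂ². Define the density matrix ω = (1−p)·|ψ₊⟩⟨ψ₊|^{AÂ} ⊗ |ψ₊⟩⟨ψ₊|^{BB̂} + p·|ψ₋⟩⟨ψ₋|^{AÂ} ⊗ |ψ₋⟩⟨ψ₋|^{BB̂} on the four-qubit space A ⊗ Â ⊗ B ⊗ B̂ = ℂ² ⊗ ℂ² ⊗ ℂ² ⊗ ℂ², and set C = Â ⊗ B̂. Then: H(ω) = H₂(p); the reduced state ω^C = Tr_{AB} ω satisfies H(ω^C) = 2; H(Tr_A ω) = H(Tr_B ω) = 1 + H₂(p); and consequently I_c(AB⟩C)_ω := H(ω^C) − H(ω) = 2 − H₂(p), I_c(A⟩BC)_ω := H(Tr_A ω) − H(ω) = 1, and I_c(B⟩AC)_ω := H(Tr_B ω) − H(ω) = 1. -/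

import Mathlib

open Matrix ComplexOrder Kronecker

/-- The von Neumann entropy (base-2) of a matrix, via its eigenvalues. -/
noncomputable def vnEntropy {n : Type*} [Fintype n] [DecidableEq n]
    (ρ : Matrix n n ℂ) : ℝ :=
  if h : ρ.IsHermitian then
    -∑ i, (h.eigenvalues i) * Real.logb 2 (h.eigenvalues i)
  else 0

/-- The binary entropy function (base 2). -/
noncomputable def binEnt (p : ℝ) : ℝ :=
  -(p * Real.logb 2 p) - (1 - p) * Real.logb 2 (1 - p)

/-- Partial trace over `A` and `B` of a state on `(A × Â) × (B × B̂)`. -/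
noncomputable def trAB {a a' b b' : Type*} [Fintype a] [Fintype b]
    (M : Matrix ((a × a') × (b × b')) ((a × a') × (b × b')) ℂ) :
    Matrix (a' × b') (a' × b') ℂ :=
  Matrix.of fun p q => ∑ i, ∑ j, M ((i, p.1), (j, p.2)) ((i, q.1), (j, q.2))

/-- Partial trace over `A` of a state on `(A × Â) × (B × B̂)`. -/
noncomputable def trA {a a' b b' : Type*} [Fintype a]
    (M : Matrix ((a × a') × (b × b')) ((a × a') × (b × b')) ℂ) :
    Matrix (a' × (b × b')) (a' × (b × b')) ℂ :=
  Matrix.of fun p q => ∑ i, M ((i, p.1), p.2) ((i, q.1), q.2)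

/-- Partial trace over `B` of a state on `(A × Â) × (B × B̂)`. -/
noncomputable def trB {a a' b b' : Type*} [Fintype b]
    (M : Matrix ((a × a') × (b × b')) ((a × a') × (b × b')) ℂ) :
    Matrix ((a × a') × b') ((a × a') × b') ℂ :=
  Matrix.of fun p q => ∑ j, M (p.1, (j, p.2)) (q.1, (j, q.2))

namespace CPFaux

open Polynomial

variable {m n : Type*} [Fintype m] [Fintype n] [DecidableEq m] [DecidableEq n]

/-! ### Spectral theory: entropy via an explicit diagonalization -/

lemma charmatrix_conj (U M : Matrix n n ℂ) (hU : U * star U = 1) :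
    charmatrix (U * M * star U) = U.map C * charmatrix M * (star U).map C := by
  have hmap : ∀ (A B : Matrix n n ℂ), (A * B).map (C : ℂ →+* ℂ[X]) = A.map C * B.map C := by
    intro A B
    simpa [RingHom.mapMatrix_apply] using map_mul ((C : ℂ →+* ℂ[X]).mapMatrix) A B
  have hone : (1 : Matrix n n ℂ).map (C : ℂ →+* ℂ[X]) = 1 := by
    simpa [RingHom.mapMatrix_apply] using map_one ((C : ℂ →+* ℂ[X]).mapMatrix)
  have hUU : U.map (C : ℂ →+* ℂ[X]) * (star U).map C = 1 := by
    rw [← hmap, hU, hone]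
  have hcomm : Commute (Matrix.scalar n (X : ℂ[X])) (U.map (C : ℂ →+* ℂ[X])) :=
    (Matrix.scalar_commute _ (fun r' => Commute.all _ _) _)
  show Matrix.scalar n (X : ℂ[X]) - (C : ℂ →+* ℂ[X]).mapMatrix (U * M * star U)
      = U.map C * (Matrix.scalar n (X : ℂ[X]) - (C : ℂ →+* ℂ[X]).mapMatrix M) * (star U).map C
  rw [Matrix.mul_sub, Matrix.sub_mul]
  congr 1
  · rw [← hcomm.eq, Matrix.mul_assoc, hUU, Matrix.mul_one]
  · simp only [RingHom.mapMatrix_apply]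
    rw [hmap, hmap]

lemma charpoly_unitary_conj (U M : Matrix n n ℂ) (hU : U ∈ Matrix.unitaryGroup n ℂ) :
    (U * M * star U).charpoly = M.charpoly := by
  have h1 : U * star U = 1 := (Matrix.mem_unitaryGroup_iff).mp hU
  have h2 : star U * U = 1 := (Matrix.mem_unitaryGroup_iff').mp hU
  have hmap : ∀ (A B : Matrix n n ℂ), (A * B).map (C : ℂ →+* ℂ[X]) = A.map C * B.map C := by
    intro A B
    simpa [RingHom.mapMatrix_apply] using map_mul ((C : ℂ →+* ℂ[X]).mapMatrix) A B
  have hone : (1 : Matrix n n ℂ).map (C : ℂ →+* ℂ[X]) = 1 := by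
    simpa [RingHom.mapMatrix_apply] using map_one ((C : ℂ →+* ℂ[X]).mapMatrix)
  unfold Matrix.charpoly
  rw [charmatrix_conj U M h1, det_mul, det_mul, mul_comm, ← mul_assoc, ← det_mul, ← hmap, h2,
    hone, det_one, one_mul]

lemma charpoly_diagonal (d : n → ℂ) :
    (Matrix.diagonal d).charpoly = ∏ i, (X - Polynomial.C (d i)) := by
  have h : charmatrix (Matrix.diagonal d) = Matrix.diagonal (fun i => X - Polynomial.C (d i)) := by
    ext i j
    by_cases h : i = j
    · subst h; rw [charmatrix_apply_eq, Matrix.diagonal_apply_eq, Matrix.diagonal_apply_eq]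
    · rw [charmatrix_apply_ne _ _ _ h, Matrix.diagonal_apply_ne _ h, Matrix.diagonal_apply_ne _ h,
        map_zero, neg_zero]
  unfold Matrix.charpoly
  rw [h, det_diagonal]

lemma charpoly_of_conj {A U : Matrix n n ℂ} (hU : U ∈ Matrix.unitaryGroup n ℂ) (d : n → ℂ)
    (hA : A = U * Matrix.diagonal d * Uᴴ) : A.charpoly = ∏ i, (X - Polynomial.C (d i)) := by
  rw [hA, ← Matrix.star_eq_conjTranspose, charpoly_unitary_conj _ _ hU, charpoly_diagonal]

lemma prod_roots (g : n → ℂ) :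
    (∏ i, (X - Polynomial.C (g i))).roots = Finset.univ.val.map g := by
  rw [Finset.prod_eq_multiset_prod]
  have := roots_multiset_prod_X_sub_C (Finset.univ.val.map g)
  rw [Multiset.map_map] at this
  exact this

lemma eig_multiset {A U : Matrix n n ℂ} (hU : U ∈ Matrix.unitaryGroup n ℂ) (d : n → ℝ)
    (hA : A = U * Matrix.diagonal (fun i => (d i : ℂ)) * Uᴴ) (hherm : A.IsHermitian) :
    Finset.univ.val.map hherm.eigenvalues = Finset.univ.val.map d := by
  have h1 : A.charpoly = ∏ i, (X - Polynomial.C ((d i : ℂ))) := charpoly_of_conj hU _ hA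
  have h2 : A.charpoly = ∏ i, (X - Polynomial.C ((hherm.eigenvalues i : ℂ))) :=
    charpoly_of_conj (hherm.eigenvectorUnitary).2 _
      (by simpa [Matrix.star_eq_conjTranspose, Function.comp_def] using hherm.spectral_theorem)
  have h3 : Finset.univ.val.map (fun i => (hherm.eigenvalues i : ℂ))
      = Finset.univ.val.map (fun i => (d i : ℂ)) := by
    rw [← prod_roots, ← prod_roots, ← h1, ← h2]
  have h4 : (Finset.univ.val.map hherm.eigenvalues).map (fun x : ℝ => (x : ℂ))
      = (Finset.univ.val.map d).map (fun x : ℝ => (x : ℂ)) := by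
    rw [Multiset.map_map, Multiset.map_map]; exact h3
  exact Multiset.map_injective Complex.ofReal_injective h4

lemma isHermitian_of_conj {U : Matrix n n ℂ} (d : n → ℝ) :
    (U * Matrix.diagonal (fun i => (d i : ℂ)) * Uᴴ).IsHermitian := by
  have hd : (Matrix.diagonal (fun i => (d i : ℂ)))ᴴ = Matrix.diagonal (fun i => (d i : ℂ)) := by
    rw [Matrix.diagonal_conjTranspose]
    ext i j
    rcases eq_or_ne i j with h | h
    · subst h; simp [Complex.conj_ofReal]
    · simp [Matrix.diagonal_apply_ne _ h]
  unfold Matrix.IsHermitian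
  rw [Matrix.conjTranspose_mul, Matrix.conjTranspose_mul, Matrix.conjTranspose_conjTranspose,
    hd, Matrix.mul_assoc]

lemma vnEntropy_of_conj (A : Matrix n n ℂ) (U : Matrix n n ℂ)
    (hU : U ∈ Matrix.unitaryGroup n ℂ) (d : n → ℝ)
    (hA : A = U * Matrix.diagonal (fun i => (d i : ℂ)) * Uᴴ) :
    vnEntropy A = -∑ i, d i * Real.logb 2 (d i) := by
  have hherm : A.IsHermitian := hA ▸ isHermitian_of_conj d
  have hm := eig_multiset hU d hA hherm
  rw [vnEntropy, dif_pos hherm]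
  congr 1
  let f : ℝ → ℝ := fun x => x * Real.logb 2 x
  show ∑ i, f (hherm.eigenvalues i) = ∑ i, f (d i)
  rw [Finset.sum_eq_multiset_sum, Finset.sum_eq_multiset_sum]
  have h1 := Multiset.map_map f hherm.eigenvalues Finset.univ.val
  have h2 := Multiset.map_map f d Finset.univ.val
  simp only [Function.comp] at h1 h2
  rw [← h1, ← h2, hm]

/-! ### Kronecker products, rank-one conjugation -/

lemma conjTranspose_kron (A : Matrix m m ℂ) (B : Matrix n n ℂ) :
    (A ⊗ₖ B)ᴴ = Aᴴ ⊗ₖ Bᴴ := by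
  ext ⟨i, j⟩ ⟨k, l⟩
  simp [Matrix.conjTranspose_apply, Matrix.kroneckerMap_apply, star_mul']

lemma kron_unitary {U : Matrix m m ℂ} {V : Matrix n n ℂ}
    (hU : U ∈ Matrix.unitaryGroup m ℂ) (hV : V ∈ Matrix.unitaryGroup n ℂ) :
    U ⊗ₖ V ∈ Matrix.unitaryGroup (m × n) ℂ := by
  rw [Matrix.mem_unitaryGroup_iff] at *
  rw [Matrix.star_eq_conjTranspose, conjTranspose_kron, ← Matrix.mul_kronecker_mul,
    ← Matrix.star_eq_conjTranspose U, ← Matrix.star_eq_conjTranspose V, hU, hV,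
    Matrix.one_kronecker_one]

lemma udu (U : Matrix n n ℂ) (d : n → ℂ) :
    U * Matrix.diagonal d * Uᴴ
      = ∑ k, d k • Matrix.vecMulVec (fun i => U i k) (fun j => star (U j k)) := by
  ext i j
  rw [Matrix.mul_apply]
  rw [Matrix.sum_apply]
  refine Finset.sum_congr rfl fun k _ => ?_
  rw [Matrix.mul_diagonal, Matrix.conjTranspose_apply]
  simp [Matrix.vecMulVec_apply]
  ring

lemma conj_diag_single (U : Matrix n n ℂ) (k₀ : n) (c : ℂ) :
    U * Matrix.diagonal (fun k => if k = k₀ then c else 0) * Uᴴ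
      = c • Matrix.vecMulVec (fun i => U i k₀) (fun j => star (U j k₀)) := by
  rw [udu, Finset.sum_eq_single k₀]
  · rw [if_pos rfl]
  · intro k _ hk; rw [if_neg hk, zero_smul]
  · intro h; exact absurd (Finset.mem_univ k₀) h

lemma conj_add_smul (U D E : Matrix n n ℂ) (c e : ℂ) :
    c • (U * D * Uᴴ) + e • (U * E * Uᴴ) = U * (c • D + e • E) * Uᴴ := by
  rw [Matrix.mul_add, Matrix.add_mul]
  rw [Matrix.mul_smul, Matrix.smul_mul, Matrix.mul_smul, Matrix.smul_mul]

lemma smul_diag_add (c e : ℂ) (f g : n → ℂ) :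
    c • Matrix.diagonal f + e • Matrix.diagonal g
      = Matrix.diagonal (fun k => c * f k + e * g k) := by
  ext i j
  rcases eq_or_ne i j with h | h
  · subst h; simp
  · simp [Matrix.diagonal_apply_ne _ h]

/-! ### Partial traces of Kronecker products -/

noncomputable def ptr {a b : Type*} [Fintype a] (M : Matrix (a × b) (a × b) ℂ) : Matrix b b ℂ :=
  Matrix.of fun i j => ∑ k, M (k, i) (k, j)

section PT
variable {a a' b b' : Type*} [Fintype a] [Fintype b]

lemma trAB_kron (M : Matrix (a × a') (a × a') ℂ) (N : Matrix (b × b') (b × b') ℂ) :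
    trAB (M ⊗ₖ N) = ptr M ⊗ₖ ptr N := by
  ext ⟨i, j⟩ ⟨k, l⟩
  simp only [trAB, ptr, Matrix.of_apply, Matrix.kroneckerMap_apply]
  rw [Finset.sum_mul_sum]

lemma trA_kron (M : Matrix (a × a') (a × a') ℂ) (N : Matrix (b × b') (b × b') ℂ) :
    trA (M ⊗ₖ N) = ptr M ⊗ₖ N := by
  ext ⟨i, j⟩ ⟨k, l⟩
  simp only [trA, ptr, Matrix.of_apply, Matrix.kroneckerMap_apply]
  rw [Finset.sum_mul]

lemma trB_kron (M : Matrix (a × a') (a × a') ℂ) (N : Matrix (b × b') (b × b') ℂ) :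
    trB (M ⊗ₖ N) = M ⊗ₖ ptr N := by
  ext ⟨i, j⟩ ⟨k, l⟩
  simp only [trB, ptr, Matrix.of_apply, Matrix.kroneckerMap_apply]
  rw [Finset.mul_sum]

lemma trAB_lin (M N : Matrix ((a × a') × (b × b')) ((a × a') × (b × b')) ℂ) (c e : ℂ) :
    trAB (c • M + e • N) = c • trAB M + e • trAB N := by
  ext i j
  simp [trAB, Finset.sum_add_distrib, Finset.mul_sum]

lemma trA_lin (M N : Matrix ((a × a') × (b × b')) ((a × a') × (b × b')) ℂ) (c e : ℂ) :
    trA (c • M + e • N) = c • trA M + e • trA N := by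
  ext i j
  simp [trA, Finset.sum_add_distrib, Finset.mul_sum]

lemma trB_lin (M N : Matrix ((a × a') × (b × b')) ((a × a') × (b × b')) ℂ) (c e : ℂ) :
    trB (c • M + e • N) = c • trB M + e • trB N := by
  ext i j
  simp [trB, Finset.sum_add_distrib, Finset.mul_sum]

end PT

/-! ### The Bell vectors and the diagonalizing unitary -/

noncomputable def psiP : Fin 2 × Fin 2 → ℂ :=
  fun x => if x.1 = x.2 then (((Real.sqrt 2)⁻¹ : ℝ) : ℂ) else 0

noncomputable def psiM : Fin 2 × Fin 2 → ℂ :=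
  fun x => if x = ((0 : Fin 2), (0 : Fin 2)) then (((Real.sqrt 2)⁻¹ : ℝ) : ℂ)
    else if x = ((1 : Fin 2), (1 : Fin 2)) then (-((Real.sqrt 2)⁻¹ : ℝ) : ℂ) else 0

noncomputable def Wmat : Matrix (Fin 2 × Fin 2) (Fin 2 × Fin 2) ℂ :=
  Matrix.of fun x y =>
    if y = ((0 : Fin 2), (0 : Fin 2)) then psiP x
    else if y = ((1 : Fin 2), (1 : Fin 2)) then psiM x
    else if x = y then 1 else 0

lemma key : (((Real.sqrt 2)⁻¹ : ℝ) : ℂ) * (((Real.sqrt 2)⁻¹ : ℝ) : ℂ) = 1 / 2 := by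
  rw [← Complex.ofReal_mul, ← mul_inv, Real.mul_self_sqrt (by norm_num)]
  norm_num

lemma key2 : ((Real.sqrt 2 : ℝ) : ℂ)⁻¹ * ((Real.sqrt 2 : ℝ) : ℂ)⁻¹ = 1 / 2 := by
  rw [← Complex.ofReal_inv, key]

lemma Wmat_col0 : (fun i => Wmat i ((0 : Fin 2), (0 : Fin 2))) = psiP := by
  funext x; simp [Wmat]

lemma Wmat_col1 : (fun i => Wmat i ((1 : Fin 2), (1 : Fin 2))) = psiM := by
  funext x; simp [Wmat]

lemma Wmat_unitary : Wmat ∈ Matrix.unitaryGroup (Fin 2 × Fin 2) ℂ := by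
  rw [Matrix.mem_unitaryGroup_iff']
  ext x y
  fin_cases x <;> fin_cases y <;>
    simp [Matrix.mul_apply, Fintype.sum_prod_type, Fin.sum_univ_two, Wmat, psiP, psiM,
      Matrix.one_apply, Complex.conj_ofReal] <;>
    norm_num [key2, Prod.ext_iff]

lemma ptr_psiP : ptr (Matrix.vecMulVec psiP (star psiP))
    = Matrix.diagonal (fun _ : Fin 2 => (((1:ℝ)/2 : ℝ) : ℂ)) := by
  ext i j
  fin_cases i <;> fin_cases j <;>
    simp [ptr, Matrix.vecMulVec_apply, Fin.sum_univ_two, psiP, Complex.conj_ofReal,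
      Matrix.diagonal] <;>
    norm_num [key2, Prod.ext_iff]

lemma ptr_psiM : ptr (Matrix.vecMulVec psiM (star psiM))
    = Matrix.diagonal (fun _ : Fin 2 => (((1:ℝ)/2 : ℝ) : ℂ)) := by
  ext i j
  fin_cases i <;> fin_cases j <;>
    simp [ptr, Matrix.vecMulVec_apply, Fin.sum_univ_two, psiM, Complex.conj_ofReal,
      Matrix.diagonal] <;>
    norm_num [key2, Prod.ext_iff]

lemma Pp_eq : Matrix.vecMulVec psiP (star psiP)
    = Wmat * Matrix.diagonal
        (fun k => if k = ((0 : Fin 2), (0 : Fin 2)) then (1 : ℂ) else 0) * Wmatᴴ := by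
  rw [conj_diag_single, one_smul]
  congr 1

lemma Pm_eq : Matrix.vecMulVec psiM (star psiM)
    = Wmat * Matrix.diagonal
        (fun k => if k = ((1 : Fin 2), (1 : Fin 2)) then (1 : ℂ) else 0) * Wmatᴴ := by
  rw [conj_diag_single, one_smul]
  congr 1

/-! ### Diagonal weight functions -/

noncomputable def dOmega (p : ℝ) : ((Fin 2 × Fin 2) × (Fin 2 × Fin 2)) → ℝ := fun k =>
  if k = (((0:Fin 2),(0:Fin 2)), ((0:Fin 2),(0:Fin 2))) then 1 - p
  else if k = (((1:Fin 2),(1:Fin 2)), ((1:Fin 2),(1:Fin 2))) then p else 0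

noncomputable def dAf (p : ℝ) : (Fin 2 × (Fin 2 × Fin 2)) → ℝ := fun k =>
  if k.2 = ((0:Fin 2),(0:Fin 2)) then (1 - p) / 2
  else if k.2 = ((1:Fin 2),(1:Fin 2)) then p / 2 else 0

noncomputable def dBf (p : ℝ) : ((Fin 2 × Fin 2) × Fin 2) → ℝ := fun k =>
  if k.1 = ((0:Fin 2),(0:Fin 2)) then (1 - p) / 2
  else if k.1 = ((1:Fin 2),(1:Fin 2)) then p / 2 else 0

lemma omega_eq (p : ℝ) :
    ((1 - p : ℝ) : ℂ) • (Matrix.vecMulVec psiP (star psiP) ⊗ₖ Matrix.vecMulVec psiP (star psiP))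
      + (p : ℂ) • (Matrix.vecMulVec psiM (star psiM) ⊗ₖ Matrix.vecMulVec psiM (star psiM))
    = (Wmat ⊗ₖ Wmat) * Matrix.diagonal (fun k => ((dOmega p k : ℝ) : ℂ))
      * (Wmat ⊗ₖ Wmat)ᴴ := by
  rw [Pp_eq, Pm_eq]
  rw [Matrix.mul_kronecker_mul, Matrix.mul_kronecker_mul, Matrix.mul_kronecker_mul,
    Matrix.mul_kronecker_mul]
  simp only [← conjTranspose_kron]
  rw [conj_add_smul]
  congr 1
  rw [Matrix.diagonal_kronecker_diagonal, Matrix.diagonal_kronecker_diagonal, smul_diag_add]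
  congr 1
  refine Matrix.diagonal_eq_diagonal_iff.mpr fun k => ?_
  fin_cases k <;> simp [dOmega] <;> push_cast <;> ring

lemma trA_omega_eq (p : ℝ) :
    trA (((1 - p : ℝ) : ℂ) • (Matrix.vecMulVec psiP (star psiP) ⊗ₖ Matrix.vecMulVec psiP (star psiP))
      + (p : ℂ) • (Matrix.vecMulVec psiM (star psiM) ⊗ₖ Matrix.vecMulVec psiM (star psiM)))
    = ((1 : Matrix (Fin 2) (Fin 2) ℂ) ⊗ₖ Wmat)
      * Matrix.diagonal (fun k => ((dAf p k : ℝ) : ℂ))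
      * ((1 : Matrix (Fin 2) (Fin 2) ℂ) ⊗ₖ Wmat)ᴴ := by
  rw [trA_lin, trA_kron, trA_kron, ptr_psiP, ptr_psiM]
  have hD : (Matrix.diagonal (fun _ : Fin 2 => (((1:ℝ)/2 : ℝ) : ℂ)))
      = 1 * Matrix.diagonal (fun _ : Fin 2 => (((1:ℝ)/2 : ℝ) : ℂ))
        * (1 : Matrix (Fin 2) (Fin 2) ℂ)ᴴ := by
    simp
  rw [hD, Pp_eq, Pm_eq]
  rw [Matrix.mul_kronecker_mul, Matrix.mul_kronecker_mul, Matrix.mul_kronecker_mul,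
    Matrix.mul_kronecker_mul]
  simp only [← conjTranspose_kron]
  rw [conj_add_smul]
  congr 1
  rw [Matrix.diagonal_kronecker_diagonal, Matrix.diagonal_kronecker_diagonal, smul_diag_add]
  congr 1
  refine Matrix.diagonal_eq_diagonal_iff.mpr fun k => ?_
  fin_cases k <;> simp [dAf] <;> push_cast <;> ring

lemma trB_omega_eq (p : ℝ) :
    trB (((1 - p : ℝ) : ℂ) • (Matrix.vecMulVec psiP (star psiP) ⊗ₖ Matrix.vecMulVec psiP (star psiP))
      + (p : ℂ) • (Matrix.vecMulVec psiM (star psiM) ⊗ₖ Matrix.vecMulVec psiM (star psiM)))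
    = (Wmat ⊗ₖ (1 : Matrix (Fin 2) (Fin 2) ℂ))
      * Matrix.diagonal (fun k => ((dBf p k : ℝ) : ℂ))
      * (Wmat ⊗ₖ (1 : Matrix (Fin 2) (Fin 2) ℂ))ᴴ := by
  rw [trB_lin, trB_kron, trB_kron, ptr_psiP, ptr_psiM]
  have hD : (Matrix.diagonal (fun _ : Fin 2 => (((1:ℝ)/2 : ℝ) : ℂ)))
      = 1 * Matrix.diagonal (fun _ : Fin 2 => (((1:ℝ)/2 : ℝ) : ℂ))
        * (1 : Matrix (Fin 2) (Fin 2) ℂ)ᴴ := by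
    simp
  rw [hD, Pp_eq, Pm_eq]
  rw [Matrix.mul_kronecker_mul, Matrix.mul_kronecker_mul, Matrix.mul_kronecker_mul,
    Matrix.mul_kronecker_mul]
  simp only [← conjTranspose_kron]
  rw [conj_add_smul]
  congr 1
  rw [Matrix.diagonal_kronecker_diagonal, Matrix.diagonal_kronecker_diagonal, smul_diag_add]
  congr 1
  refine Matrix.diagonal_eq_diagonal_iff.mpr fun k => ?_
  fin_cases k <;> simp [dBf] <;> push_cast <;> ring

lemma trAB_omega_eq (p : ℝ) :
    trAB (((1 - p : ℝ) : ℂ) • (Matrix.vecMulVec psiP (star psiP) ⊗ₖ Matrix.vecMulVec psiP (star psiP))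
      + (p : ℂ) • (Matrix.vecMulVec psiM (star psiM) ⊗ₖ Matrix.vecMulVec psiM (star psiM)))
    = (1 : Matrix (Fin 2 × Fin 2) (Fin 2 × Fin 2) ℂ)
      * Matrix.diagonal (fun _ : Fin 2 × Fin 2 => (((1:ℝ)/4 : ℝ) : ℂ))
      * (1 : Matrix (Fin 2 × Fin 2) (Fin 2 × Fin 2) ℂ)ᴴ := by
  rw [trAB_lin, trAB_kron, trAB_kron, ptr_psiP, ptr_psiM]
  rw [Matrix.diagonal_kronecker_diagonal, smul_diag_add]
  rw [Matrix.conjTranspose_one, Matrix.one_mul, Matrix.mul_one]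
  congr 1
  refine funext fun k => ?_
  push_cast
  ring

/-! ### Sum evaluation helpers -/

lemma sum_f_two {n : Type*} [Fintype n] [DecidableEq n] (c₁ c₂ : n) (hne : c₁ ≠ c₂) (A B : ℝ)
    (f : ℝ → ℝ) (hf : f 0 = 0) :
    ∑ k, f (if k = c₁ then A else if k = c₂ then B else 0) = f A + f B := by
  rw [Fintype.sum_eq_add c₁ c₂ hne (fun x hx => by rw [if_neg hx.1, if_neg hx.2]; exact hf)]
  rw [if_pos rfl, if_neg hne.symm, if_pos rfl]

lemma mul_logb_half (x : ℝ) (hx : 0 ≤ x) : x * Real.logb 2 (x / 2) = x * Real.logb 2 x - x := by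
  rcases eq_or_lt_of_le hx with h | h
  · simp [← h]
  · rw [Real.logb_div (ne_of_gt h) two_ne_zero, Real.logb_self_eq_one (by norm_num)]
    ring

lemma logb_quarter : Real.logb 2 ((1:ℝ)/4) = -2 := by
  have hlog : Real.log 2 ≠ 0 := ne_of_gt (Real.log_pos (by norm_num))
  rw [Real.logb, show ((1:ℝ)/4) = ((2:ℝ)^(2:ℕ))⁻¹ by norm_num, Real.log_inv, Real.log_pow]
  field_simp
  norm_num

end CPFaux

/-- Entropies of the collective phase flip channel output on Bell states:
for `ω = (1−p)|ψ₊⟩⟨ψ₊|⊗|ψ₊⟩⟨ψ₊| + p|ψ₋⟩⟨ψ₋|⊗|ψ₋⟩⟨ψ₋|`,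
`H(ω) = H₂(p)`, `H(ω^C) = 2`, `H(Tr_A ω) = H(Tr_B ω) = 1 + H₂(p)`, and the
resulting coherent informations are `2 − H₂(p)`, `1` and `1`. -/
theorem collective_phase_flip_entropies (p : ℝ) (hp0 : 0 ≤ p) (hp1 : p ≤ 1) :
    let ψp : Fin 2 × Fin 2 → ℂ :=
      fun x => if x.1 = x.2 then (((Real.sqrt 2)⁻¹ : ℝ) : ℂ) else 0
    let ψm : Fin 2 × Fin 2 → ℂ :=
      fun x => if x = ((0 : Fin 2), (0 : Fin 2)) then (((Real.sqrt 2)⁻¹ : ℝ) : ℂ)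
        else if x = ((1 : Fin 2), (1 : Fin 2)) then (-((Real.sqrt 2)⁻¹ : ℝ) : ℂ) else 0
    let ω : Matrix ((Fin 2 × Fin 2) × (Fin 2 × Fin 2))
        ((Fin 2 × Fin 2) × (Fin 2 × Fin 2)) ℂ :=
      ((1 - p : ℝ) : ℂ) •
          (Matrix.vecMulVec ψp (star ψp) ⊗ₖ Matrix.vecMulVec ψp (star ψp))
        + (p : ℂ) •
          (Matrix.vecMulVec ψm (star ψm) ⊗ₖ Matrix.vecMulVec ψm (star ψm))
    vnEntropy ω = binEnt p ∧
    vnEntropy (trAB ω) = 2 ∧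
    vnEntropy (trA ω) = 1 + binEnt p ∧
    vnEntropy (trB ω) = 1 + binEnt p ∧
    vnEntropy (trAB ω) - vnEntropy ω = 2 - binEnt p ∧
    vnEntropy (trA ω) - vnEntropy ω = 1 ∧
    vnEntropy (trB ω) - vnEntropy ω = 1 := by
  intro ψp ψm ω
  have hω : ω = ((1 - p : ℝ) : ℂ) •
        (Matrix.vecMulVec CPFaux.psiP (star CPFaux.psiP)
          ⊗ₖ Matrix.vecMulVec CPFaux.psiP (star CPFaux.psiP))
      + (p : ℂ) •
        (Matrix.vecMulVec CPFaux.psiM (star CPFaux.psiM)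
          ⊗ₖ Matrix.vecMulVec CPFaux.psiM (star CPFaux.psiM)) := rfl
  have hUW := CPFaux.Wmat_unitary
  have h1mem : (1 : Matrix (Fin 2) (Fin 2) ℂ) ∈ Matrix.unitaryGroup (Fin 2) ℂ :=
    Matrix.mem_unitaryGroup_iff.mpr (by simp)
  have h1mem4 : (1 : Matrix (Fin 2 × Fin 2) (Fin 2 × Fin 2) ℂ)
      ∈ Matrix.unitaryGroup (Fin 2 × Fin 2) ℂ :=
    Matrix.mem_unitaryGroup_iff.mpr (by simp)
  -- the four entropies in terms of the diagonal weights
  have HΩ : vnEntropy ω = -∑ k, CPFaux.dOmega p k * Real.logb 2 (CPFaux.dOmega p k) :=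
    CPFaux.vnEntropy_of_conj ω _ (CPFaux.kron_unitary hUW hUW) (CPFaux.dOmega p)
      (by rw [hω]; exact CPFaux.omega_eq p)
  have HA : vnEntropy (trA ω) = -∑ k, CPFaux.dAf p k * Real.logb 2 (CPFaux.dAf p k) :=
    CPFaux.vnEntropy_of_conj _ _ (CPFaux.kron_unitary h1mem hUW) (CPFaux.dAf p)
      (by rw [hω]; exact CPFaux.trA_omega_eq p)
  have HB : vnEntropy (trB ω) = -∑ k, CPFaux.dBf p k * Real.logb 2 (CPFaux.dBf p k) :=
    CPFaux.vnEntropy_of_conj _ _ (CPFaux.kron_unitary hUW h1mem) (CPFaux.dBf p)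
      (by rw [hω]; exact CPFaux.trB_omega_eq p)
  have HC : vnEntropy (trAB ω)
      = -∑ _k : Fin 2 × Fin 2, ((1:ℝ)/4) * Real.logb 2 ((1:ℝ)/4) :=
    CPFaux.vnEntropy_of_conj _ _ h1mem4 (fun _ => (1:ℝ)/4)
      (by rw [hω]; exact CPFaux.trAB_omega_eq p)
  -- evaluate the sums
  have hfz : (fun x : ℝ => x * Real.logb 2 x) 0 = 0 := by simp
  have SΩ : ∑ k, CPFaux.dOmega p k * Real.logb 2 (CPFaux.dOmega p k)
      = (1 - p) * Real.logb 2 (1 - p) + p * Real.logb 2 p := by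
    have h := CPFaux.sum_f_two (n := (Fin 2 × Fin 2) × (Fin 2 × Fin 2))
      (((0:Fin 2),(0:Fin 2)), ((0:Fin 2),(0:Fin 2)))
      (((1:Fin 2),(1:Fin 2)), ((1:Fin 2),(1:Fin 2))) (by decide) (1 - p) p
      (fun x => x * Real.logb 2 x) hfz
    simpa [CPFaux.dOmega] using h
  have hinner := CPFaux.sum_f_two (n := Fin 2 × Fin 2)
      ((0:Fin 2),(0:Fin 2)) ((1:Fin 2),(1:Fin 2)) (by decide) ((1 - p)/2) (p/2)
      (fun x => x * Real.logb 2 x) hfz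
  have SA : ∑ k, CPFaux.dAf p k * Real.logb 2 (CPFaux.dAf p k)
      = 2 * ((1 - p)/2 * Real.logb 2 ((1 - p)/2) + p/2 * Real.logb 2 (p/2)) := by
    simp only [CPFaux.dAf]
    rw [Fintype.sum_prod_type, Fin.sum_univ_two]
    rw [hinner]
    ring
  have SB : ∑ k, CPFaux.dBf p k * Real.logb 2 (CPFaux.dBf p k)
      = 2 * ((1 - p)/2 * Real.logb 2 ((1 - p)/2) + p/2 * Real.logb 2 (p/2)) := by
    simp only [CPFaux.dBf]
    rw [Fintype.sum_prod_type]
    simp only [Fin.sum_univ_two]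
    rw [Finset.sum_add_distrib]
    rw [hinner]
    ring
  have SC : ∑ _k : Fin 2 × Fin 2, ((1:ℝ)/4) * Real.logb 2 ((1:ℝ)/4) = -2 := by
    rw [Finset.sum_const, CPFaux.logb_quarter]
    simp
  -- halving identities
  have hh1 : (1 - p) * Real.logb 2 ((1 - p)/2) = (1 - p) * Real.logb 2 (1 - p) - (1 - p) :=
    CPFaux.mul_logb_half _ (by linarith)
  have hh2 : p * Real.logb 2 (p/2) = p * Real.logb 2 p - p :=
    CPFaux.mul_logb_half _ hp0
  have e1 : vnEntropy ω = binEnt p := by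
    rw [HΩ, SΩ]; simp only [binEnt]; ring
  have e2 : vnEntropy (trAB ω) = 2 := by
    rw [HC, SC]; norm_num
  have e3 : vnEntropy (trA ω) = 1 + binEnt p := by
    rw [HA, SA]; simp only [binEnt]; nlinarith [hh1, hh2]
  have e4 : vnEntropy (trB ω) = 1 + binEnt p := by
    rw [HB, SB]; simp only [binEnt]; nlinarith [hh1, hh2]
  refine ⟨e1, e2, e3, e4, ?_, ?_, ?_⟩
  · rw [e1, e2]
  · rw [e1, e3]; ring
  · rw [e1, e4]; ring
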